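/- Let (X_A, σ_A) be the edge shift of an irreducible nonnegative integer matrix A with λ_A > 1, let φ ∈ Aut(σ_A), let x ∈ X_A, and let n ≥ 1. Then φⁿ(R(x,0)) is a (−W⁻(n,φ^{−1}))-beam. Moreover: (1) if W⁻(n,φ^{−1}) ≤ 0, then φⁿ(R(x,0)) is a union of at most P_{X_A}(|W⁻(n,φ^{−1})| − W⁻(n,φ)) many distinct (−W⁻(n,φ^{−1}))-rays; (2) if W⁻(n,φ^{−1}) ≥ 0, then φⁿ(R(x,0)) is a union of at most P_{X_A}(|W⁻(n,φ)| − W⁻(n,φ^{−1})) many distinct (−W⁻(n,φ^{−1}))-rays. -/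

import Mathlib

open Matrix Set Filter

/-- The edge set of the directed graph with adjacency matrix `A`:
`A i j` edges from vertex `i` to vertex `j`. -/
def Edges {k : ℕ} (A : Matrix (Fin k) (Fin k) ℕ) : Type := Σ i j : Fin k, Fin (A i j)

namespace Edges

variable {k : ℕ} {A : Matrix (Fin k) (Fin k) ℕ}

/-- initial vertex of an edge -/
def src (e : Edges A) : Fin k := e.1

/-- terminal vertex of an edge -/
def tgt (e : Edges A) : Fin k := e.2.1

instance : UniformSpace (Edges A) := ⊥

instance : Fintype (Edges A) :=
  (@Sigma.instFintype _ _ (fun _ => inferInstance) _ : Fintype (Σ i j : Fin k, Fin (A i j)))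

end Edges

/-- The edge shift space `X_A`: bi-infinite edge paths. -/
def SFT {k : ℕ} (A : Matrix (Fin k) (Fin k) ℕ) : Set (ℤ → Edges A) :=
  {x | ∀ i : ℤ, (x i).tgt = (x (i + 1)).src}

/-- The shift map `σ_A` on `X_A`. -/
def shiftMap {k : ℕ} (A : Matrix (Fin k) (Fin k) ℕ) : ↥(SFT A) → ↥(SFT A) :=
  fun x => ⟨fun i => x.1 (i + 1), fun i => x.2 (i + 1)⟩

/-- The inverse shift map `σ_A⁻¹` on `X_A`. -/
def shiftInv {k : ℕ} (A : Matrix (Fin k) (Fin k) ℕ) : ↥(SFT A) → ↥(SFT A) :=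
  fun x => ⟨fun i => x.1 (i - 1), fun i => by
    have h := x.2 (i - 1)
    simpa [sub_add_cancel, add_sub_cancel_right] using h⟩

/-- `A` is irreducible: for all `I J` there is `n ≥ 1` with `(A^n) I J > 0`. -/
def IrreducibleMatrix {k : ℕ} (A : Matrix (Fin k) (Fin k) ℕ) : Prop :=
  ∀ I J : Fin k, ∃ n : ℕ, 1 ≤ n ∧ 0 < (A ^ n) I J

/-- `A` is primitive: some power of `A` has all entries strictly positive. -/
def PrimitiveMatrix {k : ℕ} (A : Matrix (Fin k) (Fin k) ℕ) : Prop :=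
  ∃ n : ℕ, 1 ≤ n ∧ ∀ I J : Fin k, 0 < (A ^ n) I J

/-- `φ` together with its inverse `ψ` is an automorphism of the system `(α, T)`:
a homeomorphism commuting with `T`. -/
def IsAutPair {α : Type*} [TopologicalSpace α] (T φ ψ : α → α) : Prop :=
  Continuous φ ∧ Continuous ψ ∧ Function.LeftInverse ψ φ ∧ Function.RightInverse ψ φ ∧
    φ ∘ T = T ∘ φ

section Coding

variable {E : Type*} {X : Set (ℤ → E)}

/-- `S` `φ`-codes `T`. -/
def Codes (φ : ↥X → ↥X) (S T : Set ℤ) : Prop :=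
  ∀ x y : ↥X, (∀ i ∈ S, (x : ℤ → E) i = (y : ℤ → E) i) →
    ∀ j ∈ T, (φ x : ℤ → E) j = (φ y : ℤ → E) j

/-- `W⁻(n, φ) = sup {m : (-∞,0] φⁿ-codes (-∞,m]}`. -/
noncomputable def Wminus (φ : ↥X → ↥X) (n : ℕ) : ℤ :=
  sSup {m : ℤ | Codes (φ^[n]) (Set.Iic 0) (Set.Iic m)}

/-- `W⁺(n, φ) = inf {m : [0,∞) φⁿ-codes [m,∞)}`. -/
noncomputable def Wplus (φ : ↥X → ↥X) (n : ℕ) : ℤ :=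
  sInf {m : ℤ | Codes (φ^[n]) (Set.Ici 0) (Set.Ici m)}

end Coding

section Dimension

variable {k : ℕ} (A : Matrix (Fin k) (Fin k) ℕ)

/-- `A` as a matrix over `ℚ`. -/
def Aq : Matrix (Fin k) (Fin k) ℚ := A.map (Nat.cast : ℕ → ℚ)

/-- The eventual range `R(A) = ℚ^k · A^k` (row vectors). -/
noncomputable def evRange : Submodule ℚ (Fin k → ℚ) :=
  LinearMap.range (Matrix.vecMulLinear (Aq A ^ k))

lemma evRange_mapsTo :
    ∀ x ∈ evRange A, Matrix.vecMulLinear (Aq A) x ∈ evRange A := by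
  rintro x ⟨y, rfl⟩
  exact ⟨Matrix.vecMulLinear (Aq A) y, by
    simp [Matrix.vecMulLinear_apply, Matrix.vecMul_vecMul, ← pow_succ, ← pow_succ']⟩

/-- `δ_A`, the restriction of (right multiplication by) `A` to `R(A)`. -/
noncomputable def deltaA : ↥(evRange A) →ₗ[ℚ] ↥(evRange A) :=
  LinearMap.restrict (Matrix.vecMulLinear (Aq A)) (evRange_mapsTo A)

/-- The `m`-ray `R(x, m)` determined by a point `x ∈ X_A`. -/
def ray (x : ↥(SFT A)) (m : ℤ) : Set ↥(SFT A) :=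
  {y | ∀ i : ℤ, i ≤ m → (y : ℤ → Edges A) i = (x : ℤ → Edges A) i}

/-- `U` is an `m`-beam: a finite union of `m`-rays. -/
def IsBeam (U : Set ↥(SFT A)) (m : ℤ) : Prop :=
  ∃ F : Finset ↥(SFT A), U = ⋃ x ∈ F, ray A x m

/-- The vector `v_{U,m}`: its `J`-th entry counts the distinct `m`-rays contained in the
`m`-beam `U` whose `m`-th edge ends at vertex `J`. -/
noncomputable def beamVec (U : Set ↥(SFT A)) (m : ℤ) : Fin k → ℚ := fun J =>
  (Nat.card {t : {i : ℤ // i ≤ m} → Edges A //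
    (∃ y ∈ U, ∀ i : {i : ℤ // i ≤ m}, (y : ℤ → Edges A) i.1 = t i) ∧
      (t ⟨m, le_refl m⟩).tgt = J} : ℚ)

/-- `g = θ(U)`, i.e. `g ∈ R(A)` and `δ_A^{k+m} g = v_{U,m} · A^k` for some presentation of `U`
as an `m`-beam. -/
def IsThetaVal (U : Set ↥(SFT A)) (g : Fin k → ℚ) : Prop :=
  g ∈ evRange A ∧ ∃ m : ℕ, IsBeam A U (m : ℤ) ∧
    g ᵥ* (Aq A ^ (k + m)) = beamVec A U (m : ℤ) ᵥ* (Aq A ^ k)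

/-- `S` is the image of `φ` under the dimension representation: a linear automorphism of
`R(A)` commuting with `δ_A` and satisfying `S (θ U) = θ (φ '' U)` for every beam `U`. -/
def IsDimRep (φ : ↥(SFT A) → ↥(SFT A)) (S : ↥(evRange A) →ₗ[ℚ] ↥(evRange A)) : Prop :=
  Function.Bijective S ∧ S ∘ₗ deltaA A = deltaA A ∘ₗ S ∧
    ∀ (U : Set ↥(SFT A)) (g h : Fin k → ℚ) (hg : IsThetaVal A U g)
      (hh : IsThetaVal A (φ '' U) h), S ⟨g, hg.1⟩ = ⟨h, hh.1⟩

/-- The set of eigenvalues of the complexification `S ⊗ 1` of a linear endomorphism `S`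
of `R(A)`: the complex roots of the characteristic polynomial of `S`. -/
noncomputable def cSpectrum (S : ↥(evRange A) →ₗ[ℚ] ↥(evRange A)) : Set ℂ :=
  {z : ℂ | ((LinearMap.charpoly S).map (algebraMap ℚ ℂ)).IsRoot z}

/-- The spectral radius of the complexification of `S`. -/
noncomputable def specRad (S : ↥(evRange A) →ₗ[ℚ] ↥(evRange A)) : ℝ :=
  sSup ((fun z : ℂ => ‖z‖) '' cSpectrum A S)

/-- The set of nonzero-spectrum eigenvalues of `A` over `ℂ` (roots of its characteristic
polynomial). -/
noncomputable def matSpectrum : Set ℂ :=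
  {z : ℂ | (Matrix.charpoly (A.map (Nat.cast : ℕ → ℂ))).IsRoot z}

/-- The spectral radius `ρ(A)`. -/
noncomputable def rhoA : ℝ := sSup ((fun z : ℂ => ‖z‖) '' matSpectrum A)

/-- `ρ_A⁻ = |λ_s|⁻¹` where `λ_s` is a nonzero eigenvalue of `A` of minimal modulus:
the spectral radius of `δ_A⁻¹ ⊗ 1`. -/
noncomputable def rhoAminus : ℝ :=
  sSup ((fun z => ‖z‖⁻¹) '' (matSpectrum A \ {0}))

/-- The number of admissible words of length `m` in `X_A` (with `P(0) = 1`);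
for an integer argument `z`, the value is `P(max z 0)`. -/
noncomputable def wordCount (z : ℤ) : ℕ :=
  Nat.card {w : Fin z.toNat → Edges A //
    ∃ (x : ↥(SFT A)) (i : ℤ), ∀ j : Fin z.toNat, (x : ℤ → Edges A) (i + j) = w j}

end Dimension

/-!
Since `X_A` is compact and `φⁿ`, `ψⁿ = φ⁻ⁿ` are continuous and commute with the shift, the past
`(-∞, 0]` codes `(-∞, b]` under `φⁿ` and `(-∞, a]` under `ψⁿ`, where `b = W⁻(n, φ)` and
`a = W⁻(n, φ⁻¹)`; both suprema are attained because, by irreducibility and `λ_A > 1`, two distinct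
points share a past. Composing, `ψⁿ ∘ φⁿ = id` codes `(-∞, m]` into `(-∞, m + a + b]`, so
`a + b ≤ 0`. Pulling back by `ψⁿ` shows that `φⁿ(R(x, 0))` contains the `(-a)`-ray of each of its
points, and all its points agree on `(-∞, b]`; hence such a ray is determined by the word of
length `-a - b` on `(b, -a]`.
-/

theorem exists_finset_forall_eq_of_continuous {ι E : Type*} [UniformSpace E]
    [DiscreteUniformity E] {X : Set (ι → E)} [CompactSpace X] {g : X → E} (hg : Continuous g) :
    ∃ I : Finset ι, ∀ x y : X, (∀ i ∈ I, (x : ι → E) i = (y : ι → E) i) → g x = g y := by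
  -- `g` is uniformly continuous, and an entourage of a product uniformity constrains only
  -- finitely many coordinates.
  have hdiag : {p : X × X | g p.1 = g p.2} ∈ uniformity X :=
    CompactSpace.uniformContinuous_of_continuous hg (DiscreteUniformity.relId_mem_uniformity E)
  rw [uniformity_subtype] at hdiag
  obtain ⟨t, ht, hsub⟩ := hdiag
  simp only [Pi.uniformity, DiscreteUniformity.eq_principal_setRelId, Filter.comap_principal] at ht
  obtain ⟨I, hI⟩ := (Filter.mem_iInf_finite' _).mp ht
  rw [Filter.iInf_principal_finset, Filter.mem_principal] at hI
  refine ⟨I.map Equiv.plift.toEmbedding, fun x y hxy => hsub (a := (x, y)) (hI ?_)⟩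
  simp only [Set.mem_iInter]
  intro i hi
  exact hxy _ (Finset.mem_map_of_mem _ hi)

theorem Codes.comp {E : Type*} {X : Set (ℤ → E)} {f g : X → X} {S T U : Set ℤ}
    (hf : Codes f S T) (hg : Codes g T U) : Codes (g ∘ f) S U :=
  fun x y hxy => hg (f x) (f y) (hf x y hxy)

section IsAutPair

variable {α : Type*} [TopologicalSpace α] {T φ ψ : α → α}

theorem IsAutPair.commute (h : IsAutPair T φ ψ) : Function.Commute φ T :=
  congrFun h.2.2.2.2

theorem IsAutPair.symm (h : IsAutPair T φ ψ) : IsAutPair T ψ φ := by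
  have hcomm := h.commute
  obtain ⟨hφ, hψ, hleft, hright, -⟩ := h
  exact ⟨hψ, hφ, hright, hleft, funext (hcomm.inverse_left hleft hright)⟩

theorem IsAutPair.iterate (h : IsAutPair T φ ψ) (n : ℕ) : IsAutPair T φ^[n] ψ^[n] := by
  have hcomm := h.commute
  obtain ⟨hφ, hψ, hleft, hright, -⟩ := h
  exact ⟨hφ.iterate n, hψ.iterate n, hleft.iterate n, hright.iterate n,
    funext (hcomm.iterate_left n)⟩

end IsAutPair

theorem Matrix.exists_two_le_sum_row {ι : Type*} [Fintype ι] [Nonempty ι]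
    (A : Matrix ι ι ℕ) {lam : ℝ} (hlam : 1 < lam) {w : ι → ℝ} (hw : ∀ i, 0 < w i)
    (heig : (A.map (Nat.cast : ℕ → ℝ)).mulVec w = lam • w) : ∃ I, 2 ≤ ∑ j, A I j := by
  obtain ⟨I, hI⟩ := Finite.exists_max w
  refine ⟨I, ?_⟩
  by_contra! h
  have hrow : ((∑ j, A I j : ℕ) : ℝ) ≤ 1 := by exact_mod_cast (by omega : ∑ j, A I j ≤ 1)
  have hwI : lam * w I ≤ w I :=
    calc lam * w I = ∑ j, (A I j : ℝ) * w j := by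
          simpa [Matrix.mulVec, dotProduct] using (congrFun heig I).symm
      _ ≤ ∑ j, (A I j : ℝ) * w I :=
          Finset.sum_le_sum fun j _ => mul_le_mul_of_nonneg_left (hI j) (Nat.cast_nonneg _)
      _ = ((∑ j, A I j : ℕ) : ℝ) * w I := by push_cast; rw [Finset.sum_mul]
      _ ≤ w I := mul_le_of_le_one_left (hw I).le hrow
  exact absurd hwI (not_le.mpr ((lt_mul_iff_one_lt_left (hw I)).mpr hlam))

namespace EdgeShift

variable {k : ℕ} {A : Matrix (Fin k) (Fin k) ℕ}

instance : DiscreteUniformity (Edges A) := ⟨rfl⟩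

variable (A) in
theorem isClosed_SFT : IsClosed (SFT A) := by
  have h : SFT A = ⋂ i : ℤ, {x : ℤ → Edges A | (x i).tgt = (x (i + 1)).src} := by
    ext x; simp [SFT]
  rw [h]
  let : TopologicalSpace (Fin k) := ⊥
  have : DiscreteTopology (Fin k) := ⟨rfl⟩
  exact isClosed_iInter fun i => isClosed_eq
    ((continuous_of_discreteTopology (f := Edges.tgt)).comp (continuous_apply i))
    ((continuous_of_discreteTopology (f := Edges.src)).comp (continuous_apply (i + 1)))

instance : CompactSpace (SFT A) :=
  isCompact_iff_compactSpace.mp (isClosed_SFT A).isCompact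

variable (A) in
def shiftBy (t : ℤ) (x : SFT A) : SFT A :=
  ⟨fun i => x.1 (i + t), fun i => by simpa only [add_right_comm] using x.2 (i + t)⟩

@[simp]
theorem shiftBy_apply (t : ℤ) (x : SFT A) (i : ℤ) : (shiftBy A t x).1 i = x.1 (i + t) := rfl

theorem shiftBy_zero (x : SFT A) : shiftBy A 0 x = x :=
  Subtype.ext (funext fun i => congrArg x.1 (add_zero i))

theorem shiftMap_shiftBy (t : ℤ) (x : SFT A) : shiftMap A (shiftBy A t x) = shiftBy A (t + 1) x :=
  Subtype.ext (funext fun i => congrArg x.1 (by ring))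

theorem shiftMap_injective : Function.Injective (shiftMap A) := fun x y h =>
  Subtype.ext (funext fun i => by
    simpa [shiftMap] using congrFun (congrArg Subtype.val h) (i - 1))

theorem commute_shiftBy {f : SFT A → SFT A} (hf : Function.Commute f (shiftMap A)) (t : ℤ) :
    Function.Commute f (shiftBy A t) := by
  induction t using Int.induction_on with
  | zero => intro x; rw [shiftBy_zero, shiftBy_zero]
  | succ m ih => intro x; rw [← shiftMap_shiftBy, hf, ih, shiftMap_shiftBy]
  | pred m ih =>
    intro x
    apply shiftMap_injective
    rw [← hf, shiftMap_shiftBy, shiftMap_shiftBy, sub_add_cancel, ih]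

theorem codes_Iic_shift {f : SFT A → SFT A} (hf : Function.Commute f (shiftMap A)) {c : ℤ}
    (hc : Codes f (Iic 0) (Iic c)) (m : ℤ) : Codes f (Iic m) (Iic (m + c)) := by
  intro x y hxy j hj
  have h := hc (shiftBy A m x) (shiftBy A m y)
    (fun i hi => hxy (i + m) (by simp only [mem_Iic] at hi ⊢; omega)) (j - m)
    (by simp only [mem_Iic] at hj ⊢; omega)
  rwa [commute_shiftBy hf, commute_shiftBy hf, shiftBy_apply, shiftBy_apply, sub_add_cancel] at h

theorem exists_codes_Iic {f : SFT A → SFT A} (hfc : Continuous f)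
    (hf : Function.Commute f (shiftMap A)) : ∃ c : ℤ, Codes f (Iic 0) (Iic c) := by
  obtain ⟨I, hI⟩ := exists_finset_forall_eq_of_continuous (X := SFT A) (g := fun x => (f x).1 0)
    ((continuous_apply 0).comp (continuous_subtype_val.comp hfc))
  obtain ⟨M, hM⟩ := I.bddAbove
  refine ⟨-M, fun x y hxy j hj => ?_⟩
  have h := hI (shiftBy A j x) (shiftBy A j y) fun i hi => hxy (i + j) <| by
    have := hM hi
    simp only [mem_Iic] at hj this ⊢
    omega
  rwa [commute_shiftBy hf, commute_shiftBy hf, shiftBy_apply, shiftBy_apply, zero_add] at h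

theorem bddAbove_codes_Iic {f : SFT A → SFT A} (hinj : Function.Injective f) {u v : SFT A}
    (huv : u ≠ v) (hagree : ∀ i ≤ (0 : ℤ), u.1 i = v.1 i) : BddAbove {c : ℤ | Codes f (Iic 0) (Iic c)} := by
  obtain ⟨j, hj⟩ : ∃ j, (f u).1 j ≠ (f v).1 j := by
    by_contra! h
    exact huv (hinj (Subtype.ext (funext h)))
  refine ⟨j, fun c hc => ?_⟩
  by_contra! hlt
  exact hj (hc u v hagree j hlt.le)

theorem codes_Iic_sSup {f : SFT A → SFT A} (hfc : Continuous f)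
    (hf : Function.Commute f (shiftMap A)) (hinj : Function.Injective f) {u v : SFT A} (huv : u ≠ v)
    (hagree : ∀ i ≤ (0 : ℤ), u.1 i = v.1 i) :
    Codes f (Iic 0) (Iic (sSup {c : ℤ | Codes f (Iic 0) (Iic c)})) :=
  Int.csSup_mem (exists_codes_Iic hfc hf) (bddAbove_codes_Iic hinj huv hagree)

theorem codes_Iic_Wminus {φ ψ : SFT A → SFT A} (hφ : IsAutPair (shiftMap A) φ ψ) (n : ℕ)
    {u v : SFT A} (huv : u ≠ v) (hagree : ∀ i ≤ (0 : ℤ), u.1 i = v.1 i) :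
    Codes φ^[n] (Iic 0) (Iic (Wminus φ n)) :=
  have hφn := hφ.iterate n
  codes_Iic_sSup hφn.1 hφn.commute (hφn.2.2.1 : Function.LeftInverse _ _).injective huv hagree

theorem exists_src_eq (hA : IrreducibleMatrix A) (J : Fin k) : ∃ e : Edges A, e.src = J := by
  obtain ⟨n, hn, hpos⟩ := hA J J
  obtain ⟨m, rfl⟩ : ∃ m, n = m + 1 := ⟨n - 1, by omega⟩
  rw [pow_succ', Matrix.mul_apply] at hpos
  obtain ⟨l, -, hl⟩ := Finset.exists_ne_zero_of_sum_ne_zero hpos.ne'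
  exact ⟨⟨J, l, ⟨0, Nat.pos_of_ne_zero (left_ne_zero_of_mul hl)⟩⟩, rfl⟩

theorem exists_tgt_eq (hA : IrreducibleMatrix A) (J : Fin k) : ∃ e : Edges A, e.tgt = J := by
  obtain ⟨n, hn, hpos⟩ := hA J J
  obtain ⟨m, rfl⟩ : ∃ m, n = m + 1 := ⟨n - 1, by omega⟩
  rw [pow_succ, Matrix.mul_apply] at hpos
  obtain ⟨l, -, hl⟩ := Finset.exists_ne_zero_of_sum_ne_zero hpos.ne'
  exact ⟨⟨l, J, ⟨0, Nat.pos_of_ne_zero (right_ne_zero_of_mul hl)⟩⟩, rfl⟩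

variable (A) in
def forwardPath (next : Fin k → Edges A) (e : Edges A) : ℕ → Edges A
  | 0 => e
  | t + 1 => next (forwardPath next e t).tgt

variable (A) in
def backwardPath (prev : Fin k → Edges A) (J : Fin k) : ℕ → Edges A
  | 0 => prev J
  | t + 1 => prev (backwardPath prev J t).src

variable (A) in
def concatPath (prev next : Fin k → Edges A) (e : Edges A) (i : ℤ) : Edges A :=
  if 1 ≤ i then forwardPath A next e (i - 1).toNat else backwardPath A prev e.src (-i).toNat

theorem concatPath_mem {prev next : Fin k → Edges A} (hprev : ∀ J, (prev J).tgt = J)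
    (hnext : ∀ J, (next J).src = J) (e : Edges A) : concatPath A prev next e ∈ SFT A := by
  intro i
  rcases lt_trichotomy i 0 with hi | rfl | hi
  · have he : (-i).toNat = (-(i + 1)).toNat + 1 := by omega
    simp only [concatPath, if_neg (show ¬ 1 ≤ i by omega), if_neg (show ¬ 1 ≤ i + 1 by omega), he,
      backwardPath, hprev]
  · simp [concatPath, forwardPath, backwardPath, hprev]
  · have he : (i + 1 - 1).toNat = (i - 1).toNat + 1 := by omega
    simp only [concatPath, if_pos (show 1 ≤ i by omega), if_pos (show 1 ≤ i + 1 by omega), he,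
      forwardPath, hnext]

theorem exists_ne_forall_le_zero_eq [Nonempty (Fin k)] (hA : IrreducibleMatrix A) {lam : ℝ}
    (hlam : 1 < lam) {w : Fin k → ℝ} (hw : ∀ i, 0 < w i)
    (heig : (A.map (Nat.cast : ℕ → ℝ)).mulVec w = lam • w) :
    ∃ u v : SFT A, u ≠ v ∧ ∀ i ≤ (0 : ℤ), u.1 i = v.1 i := by
  -- Two distinct edges out of the same vertex `I`, with a common backward continuation.
  choose prev hprev using exists_tgt_eq hA
  choose next hnext using exists_src_eq hA
  obtain ⟨I, hI⟩ := A.exists_two_le_sum_row hlam hw heig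
  obtain ⟨t, t', htt'⟩ : ∃ t t' : Σ j, Fin (A I j), t ≠ t' :=
    Fintype.exists_pair_of_one_lt_card (by simp only [Fintype.card_sigma, Fintype.card_fin]; omega)
  refine ⟨⟨_, concatPath_mem hprev hnext ⟨I, t⟩⟩, ⟨_, concatPath_mem hprev hnext ⟨I, t'⟩⟩,
    fun h => htt' ?_, fun i hi => by simp [concatPath, show ¬ 1 ≤ i by omega, Edges.src]⟩
  have h1 := congrFun (congrArg Subtype.val h) 1
  simp only [concatPath, le_refl, sub_self, Int.toNat_zero, forwardPath] at h1
  exact eq_of_heq (Sigma.mk.inj_iff.mp h1).2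

section Automorphism

variable {f g : SFT A → SFT A} {a b : ℤ}

theorem add_nonpos_of_codes_Iic (hfg : IsAutPair (shiftMap A) f g)
    (hb : Codes f (Iic 0) (Iic b)) (ha : Codes g (Iic 0) (Iic a)) {u v : SFT A} (huv : u ≠ v)
    (hagree : ∀ i ≤ (0 : ℤ), u.1 i = v.1 i) : a + b ≤ 0 := by
  by_contra! hpos
  have hgf : Function.LeftInverse g f := hfg.2.2.1
  -- `g ∘ f = id` spreads agreement on `(-∞, m]` to `(-∞, m + (b + a)]`, and `b + a > 0`.
  have hstep : ∀ m : ℤ, (∀ i ≤ m, u.1 i = v.1 i) → ∀ i ≤ m + (b + a), u.1 i = v.1 i := by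
    intro m hm i hi
    have h := ((codes_Iic_shift hfg.commute hb m).comp
      (codes_Iic_shift hfg.symm.commute ha (m + b))) u v hm i (by simp only [mem_Iic]; omega)
    rwa [Function.comp_apply, Function.comp_apply, hgf u, hgf v] at h
  have hall : ∀ t : ℕ, ∀ i ≤ t * (b + a), u.1 i = v.1 i := by
    intro t
    induction t with
    | zero => simpa using hagree
    | succ t ih => exact fun i hi => hstep _ ih i (by push_cast at hi; linarith)
  exact huv (Subtype.ext (funext fun i => hall i.toNat i
    ((Int.self_le_toNat i).trans (le_mul_of_one_le_right (by positivity) (by omega)))))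

theorem ray_subset_image_ray (hfg : IsAutPair (shiftMap A) f g) (ha : Codes g (Iic 0) (Iic a))
    (x : SFT A) : ∀ z ∈ f '' ray A x 0, ray A z (-a) ⊆ f '' ray A x 0 := by
  have hgf : Function.LeftInverse g f := hfg.2.2.1
  have hfg' : Function.RightInverse g f := hfg.2.2.2.1
  rintro _ ⟨y, hy, rfl⟩ z hz
  refine ⟨g z, fun i hi => ?_, hfg' z⟩
  have h := codes_Iic_shift hfg.symm.commute ha (-a) z (f y) hz i (by simpa using hi)
  rw [hgf y] at h
  exact h.trans (hy i hi)

theorem image_ray_eqOn (hb : Codes f (Iic 0) (Iic b)) (x : SFT A) :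
    ∀ z ∈ f '' ray A x 0, ∀ z' ∈ f '' ray A x 0, ∀ i ≤ b, z.1 i = z'.1 i := by
  rintro _ ⟨y, hy, rfl⟩ _ ⟨y', hy', rfl⟩
  exact hb y y' fun i hi => (hy i hi).trans (hy' i hi).symm

end Automorphism

theorem exists_finset_card_le_wordCount {U : Set (SFT A)} {m b : ℤ}
    (hray : ∀ z ∈ U, ray A z m ⊆ U) (hagree : ∀ z ∈ U, ∀ z' ∈ U, ∀ i ≤ b, z.1 i = z'.1 i) :
    ∃ F : Finset (SFT A), F.card ≤ wordCount A (m - b) ∧ U = ⋃ y ∈ F, ray A y m := by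
  -- A point of `U` is determined up to `m` by its word on `(b, m]`; pick one point per word.
  let word : SFT A → Fin (m - b).toNat → Edges A := fun z j => z.1 (b + 1 + j)
  obtain ⟨V, hVU, hV⟩ := Set.exists_subset_bijOn U word
  have hVfin : V.Finite := Set.Finite.of_finite_image (Set.toFinite _) hV.injOn
  refine ⟨hVfin.toFinset, ?_, ?_⟩
  · calc hVfin.toFinset.card = (word '' U).ncard := by
          rw [← hV.image_eq, hV.injOn.ncard_image, Set.ncard_eq_toFinset_card V hVfin]
      _ ≤ wordCount A (m - b) := by
        rw [wordCount, ← Set.coe_ofPred, Nat.card_coe_set_eq]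
        exact Set.ncard_le_ncard (by rintro _ ⟨z, -, rfl⟩; exact ⟨z, b + 1, fun j => rfl⟩)
  · ext z
    simp only [mem_iUnion, Set.Finite.mem_toFinset, exists_prop]
    constructor
    · intro hz
      obtain ⟨y, hy, hyz⟩ := hV.surjOn ⟨z, hz, rfl⟩
      refine ⟨y, hy, fun i hi => ?_⟩
      rcases le_or_gt i b with hib | hbi
      · exact hagree z hz y (hVU hy) i hib
      · have h := congrFun hyz ⟨(i - b - 1).toNat, by omega⟩
        have hi' : b + 1 + ((i - b - 1).toNat : ℤ) = i := by omega
        simp only [word, hi'] at h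
        exact h.symm
    · rintro ⟨y, hy, hzy⟩
      exact hray y (hVU hy) hzy

end EdgeShift

theorem stmt11_general {k : ℕ} (A : Matrix (Fin k) (Fin k) ℕ) (hA : IrreducibleMatrix A)
    (lamA : ℝ) (hlamA : 1 < lamA) (w : Fin k → ℝ) (hw : ∀ i, 0 < w i)
    (heig : (A.map (Nat.cast : ℕ → ℝ)).mulVec w = lamA • w)
    (φ ψ : ↥(SFT A) → ↥(SFT A)) (hφ : IsAutPair (shiftMap A) φ ψ)
    (x : ↥(SFT A)) (n : ℕ) :
    IsBeam A (φ^[n] '' ray A x 0) (-(Wminus ψ n)) ∧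
      (Wminus ψ n ≤ 0 →
        ∃ F : Finset ↥(SFT A), (F.card : ℤ) ≤ wordCount A (|Wminus ψ n| - Wminus φ n) ∧
          φ^[n] '' ray A x 0 = ⋃ y ∈ F, ray A y (-(Wminus ψ n))) ∧
      (0 ≤ Wminus ψ n →
        ∃ F : Finset ↥(SFT A), (F.card : ℤ) ≤ wordCount A (|Wminus φ n| - Wminus ψ n) ∧
          φ^[n] '' ray A x 0 = ⋃ y ∈ F, ray A y (-(Wminus ψ n))) := by
  have : Nonempty (Fin k) := ⟨(x.1 0).src⟩
  obtain ⟨u, v, huv, hagree⟩ := EdgeShift.exists_ne_forall_le_zero_eq hA hlamA hw heig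
  have hφn := hφ.iterate n
  have ha := EdgeShift.codes_Iic_Wminus hφ.symm n huv hagree
  have hb := EdgeShift.codes_Iic_Wminus hφ n huv hagree
  have hab := EdgeShift.add_nonpos_of_codes_Iic hφn hb ha huv hagree
  obtain ⟨F, hcard, hF⟩ := EdgeShift.exists_finset_card_le_wordCount
    (EdgeShift.ray_subset_image_ray hφn ha x) (EdgeShift.image_ray_eqOn hb x)
  refine ⟨⟨F, hF⟩, fun ha0 => ⟨F, ?_, hF⟩, fun ha0 => ⟨F, ?_, hF⟩⟩
  · rw [abs_of_nonpos ha0]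
    exact_mod_cast hcard
  · rw [abs_of_nonpos (by omega : Wminus φ n ≤ 0), neg_sub_comm]
    exact_mod_cast hcard

/-- For any `0`-ray `R(x,0)` and any `n ≥ 1`, `φⁿ(R(x,0))` is a
`(−W⁻(n,φ⁻¹))`-beam; moreover if `W⁻(n,φ⁻¹) ≤ 0` it is a union of at most
`P_{X_A}(|W⁻(n,φ⁻¹)| − W⁻(n,φ))` distinct `(−W⁻(n,φ⁻¹))`-rays, and if `W⁻(n,φ⁻¹) ≥ 0` it is a
union of at most `P_{X_A}(|W⁻(n,φ)| − W⁻(n,φ⁻¹))` distinct `(−W⁻(n,φ⁻¹))`-rays. -/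
theorem stmt11 {k : ℕ} (A : Matrix (Fin k) (Fin k) ℕ) (hA : IrreducibleMatrix A)
    (lamA : ℝ) (hlamA : 1 < lamA) (w : Fin k → ℝ) (hw : ∀ i, 0 < w i)
    (heig : (A.map (Nat.cast : ℕ → ℝ)).mulVec w = lamA • w)
    (φ ψ : ↥(SFT A) → ↥(SFT A)) (hφ : IsAutPair (shiftMap A) φ ψ)
    (x : ↥(SFT A)) (n : ℕ) (hn : 1 ≤ n) :
    IsBeam A (φ^[n] '' ray A x 0) (-(Wminus ψ n)) ∧
      (Wminus ψ n ≤ 0 →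
        ∃ F : Finset ↥(SFT A), (F.card : ℤ) ≤ wordCount A (|Wminus ψ n| - Wminus φ n) ∧
          φ^[n] '' ray A x 0 = ⋃ y ∈ F, ray A y (-(Wminus ψ n))) ∧
      (0 ≤ Wminus ψ n →
        ∃ F : Finset ↥(SFT A), (F.card : ℤ) ≤ wordCount A (|Wminus φ n| - Wminus ψ n) ∧
          φ^[n] '' ray A x 0 = ⋃ y ∈ F, ray A y (-(Wminus ψ n))) :=
  stmt11_general A hA lamA hlamA w hw heig φ ψ hφ x n
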